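/- arXiv:2009.09141 — 4 statements merged into one kernel-verified Lean document; each statement's English description precedes it below -/
import Mathlib

section
/- Let (S, μ) be a measure space and let φ_1, …, φ_n : S → ℂ be measurable functions that are orthonormal, i.e. ∫_S φ_i(x) · conj(φ_j(x)) dμ(x) = δ_{ij} for all 1 ≤ i, j ≤ n. Define the kernel K(x,y) = Σ_{i=1}^n φ_i(x) · conj(φ_i(y)). Then for every fixed (x_1, …, x_{n-1}) ∈ S^{n-1}, ∫_S det((K(x_i, x_j))_{1 ≤ i,j ≤ n}) dμ(x_n) = det((K(x_i, x_j))_{1 ≤ i,j ≤ n-1}). -/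
/-!
Expanding the bordered determinant along its last row and column gives
`det [[A, u], [v, d]] = d * det A - v ⬝ adj(A) u` with `A = (K(xᵢ, xⱼ))`, `uᵢ = K(xᵢ, t)`,
`vⱼ = K(t, xⱼ)`, `d = K(t, t)`. By orthonormality `∫ K(t, t) dμ(t)` is the number `N` of functions
and `∫ K(xᵢ, t) K(t, xⱼ) dμ(t) = K(xᵢ, xⱼ)` (the reproducing property), so the integral of the
bordered determinant is `N det A - tr(adj(A) A) = (N - n) det A`, which is `det A` when `N = n + 1`.
-/

open MeasureTheory ComplexConjugate

namespace Matrix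

variable {R : Type*} [CommRing R]

theorem det_bordered_zero {n : ℕ} (M : Matrix (Fin (n + 1)) (Fin (n + 1)) R) :
    M.det = M 0 0 * (M.submatrix Fin.succ Fin.succ).det -
      (fun j => M 0 j.succ) ⬝ᵥ
        (M.submatrix Fin.succ Fin.succ).adjugate *ᵥ fun i => M i.succ 0 := by
  rcases n with _ | m
  · simp [det_unique]
  set A := M.submatrix Fin.succ Fin.succ
  have minor : ∀ j : Fin (m + 1), (-1) ^ (j : ℕ) * (M.submatrix Fin.succ j.succ.succAbove).det =
      (A.adjugate *ᵥ fun i => M i.succ 0) j := by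
    intro j
    rw [det_succ_column_zero, mulVec, dotProduct, Finset.mul_sum]
    refine Finset.sum_congr rfl fun i _ => ?_
    rw [adjugate_fin_succ_eq_det_submatrix]
    simp only [submatrix_apply, Fin.succ_succAbove_zero, submatrix_submatrix, Function.comp_def,
      Fin.succ_succAbove_succ, A, pow_add]
    ring
  rw [det_succ_row_zero, Fin.sum_univ_succ, dotProduct, sub_eq_add_neg, ← Finset.sum_neg_distrib]
  simp only [Fin.val_zero, pow_zero, one_mul, Fin.succAbove_zero, ← minor, Fin.val_succ, pow_succ]
  congr 1
  refine Finset.sum_congr rfl fun j _ => ?_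
  ring

theorem det_bordered_last {n : ℕ} (M : Matrix (Fin (n + 1)) (Fin (n + 1)) R) :
    M.det = M (Fin.last n) (Fin.last n) * (M.submatrix Fin.castSucc Fin.castSucc).det -
      (fun j => M (Fin.last n) j.castSucc) ⬝ᵥ
        (M.submatrix Fin.castSucc Fin.castSucc).adjugate *ᵥ
          fun i => M i.castSucc (Fin.last n) := by
  have rotate_zero : (finRotate (n + 1)).symm 0 = Fin.last n := by
    rw [Equiv.symm_apply_eq, finRotate_last]
  have rotate_succ (i : Fin n) : (finRotate (n + 1)).symm i.succ = i.castSucc := by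
    rw [Equiv.symm_apply_eq, finRotate_apply, Fin.coeSucc_eq_succ]
  have corner : ((M.submatrix (finRotate (n + 1)).symm (finRotate (n + 1)).symm).submatrix
      Fin.succ Fin.succ) = M.submatrix Fin.castSucc Fin.castSucc := by
    ext i j
    simp only [submatrix_apply, rotate_succ]
  rw [← det_submatrix_equiv_self (finRotate (n + 1)).symm, det_bordered_zero, corner]
  simp only [submatrix_apply, rotate_zero, rotate_succ]

theorem trace_adjugate_mul {n : Type*} [Fintype n] [DecidableEq n] (A : Matrix n n R) :
    trace (A.adjugate * A) = Fintype.card n * A.det := by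
  rw [adjugate_mul, trace_smul, trace_one, smul_eq_mul, mul_comm]

end Matrix

section ProjectionKernel

variable {S 𝕜 ι : Type*} [RCLike 𝕜]

def projKernel [Fintype ι] (φ : ι → S → 𝕜) (x y : S) : 𝕜 :=
  ∑ k, φ k x * conj (φ k y)

def kernelMatrix {m : Type*} (K : S → S → 𝕜) (x : m → S) : Matrix m m 𝕜 :=
  Matrix.of fun i j => K (x i) (x j)

theorem projKernel_mul_projKernel [Fintype ι] (φ : ι → S → 𝕜) (a t b : S) :
    projKernel φ a t * projKernel φ t b =
      ∑ k, ∑ l, φ k a * conj (φ l b) * (φ l t * conj (φ k t)) := by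
  simp only [projKernel, Finset.sum_mul_sum]
  refine Finset.sum_congr rfl fun k _ => Finset.sum_congr rfl fun l _ => ?_
  ring

variable [MeasurableSpace S] {μ : Measure S}

theorem memLp_two_of_integral_mul_conj_ne_zero {f : S → 𝕜} (hf : AEStronglyMeasurable f μ)
    (h : ∫ x, f x * conj (f x) ∂μ ≠ 0) : MemLp f 2 μ := by
  have hsq : Integrable (fun x => f x * conj (f x)) μ := by
    by_contra hint
    exact h (integral_undef hint)
  refine (memLp_two_iff_integrable_sq_norm hf).mpr ?_
  simpa only [RCLike.mul_conj, ← RCLike.ofReal_pow, RCLike.ofReal_re] using hsq.re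

theorem MeasureTheory.MemLp.integrable_mul_conj {f g : S → 𝕜} (hf : MemLp f 2 μ)
    (hg : MemLp g 2 μ) : Integrable (fun x => f x * conj (g x)) μ :=
  hf.integrable_mul hg.star

section Orthonormal

variable [DecidableEq ι] {φ : ι → S → 𝕜} (hmeas : ∀ i, AEStronglyMeasurable (φ i) μ)
  (horth : ∀ i j, ∫ x, φ i x * conj (φ j x) ∂μ = if i = j then 1 else 0)
include hmeas horth

theorem integrable_mul_conj_of_orthonormal (k l : ι) :
    Integrable (fun x => φ k x * conj (φ l x)) μ := by
  have hL2 (i : ι) : MemLp (φ i) 2 μ :=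
    memLp_two_of_integral_mul_conj_ne_zero (hmeas i) (by simp [horth])
  exact (hL2 k).integrable_mul_conj (hL2 l)

variable [Fintype ι]

theorem integrable_projKernel_diag : Integrable (fun t => projKernel φ t t) μ :=
  integrable_finsetSum _ fun k _ => integrable_mul_conj_of_orthonormal hmeas horth k k

theorem integral_projKernel_diag : ∫ t, projKernel φ t t ∂μ = Fintype.card ι := by
  simp only [projKernel]
  rw [integral_finsetSum _ fun k _ => integrable_mul_conj_of_orthonormal hmeas horth k k]
  simp [horth]

theorem integrable_projKernel_mul_projKernel (a b : S) :
    Integrable (fun t => projKernel φ a t * projKernel φ t b) μ := by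
  simp only [projKernel_mul_projKernel]
  exact integrable_finsetSum _ fun k _ => integrable_finsetSum _ fun l _ =>
    (integrable_mul_conj_of_orthonormal hmeas horth l k).const_mul _

theorem integral_projKernel_mul_projKernel (a b : S) :
    ∫ t, projKernel φ a t * projKernel φ t b ∂μ = projKernel φ a b := by
  simp only [projKernel_mul_projKernel]
  rw [integral_finsetSum _ fun k _ => integrable_finsetSum _ fun l _ =>
    (integrable_mul_conj_of_orthonormal hmeas horth l k).const_mul _]
  refine Finset.sum_congr rfl fun k _ => ?_
  rw [integral_finsetSum _ fun l _ =>
    (integrable_mul_conj_of_orthonormal hmeas horth l k).const_mul _]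
  simp [integral_const_mul, horth]

theorem integral_det_kernelMatrix_snoc {n : ℕ} (x : Fin n → S) :
    ∫ t, (kernelMatrix (projKernel φ) (Fin.snoc x t : Fin (n + 1) → S)).det ∂μ =
      (Fintype.card ι - n) * (kernelMatrix (projKernel φ) x).det := by
  set A := kernelMatrix (projKernel φ) x
  have bordered (t : S) :
      (kernelMatrix (projKernel φ) (Fin.snoc x t : Fin (n + 1) → S)).det =
        projKernel φ t t * A.det -
          ∑ j, ∑ i, A.adjugate j i * (projKernel φ (x i) t * projKernel φ t (x j)) := by
    have corner : (kernelMatrix (projKernel φ) (Fin.snoc x t : Fin (n + 1) → S)).submatrix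
        Fin.castSucc Fin.castSucc = A := by
      ext i j
      simp only [Matrix.submatrix_apply, kernelMatrix, Matrix.of_apply, Fin.snoc_castSucc, A]
    rw [Matrix.det_bordered_last, corner]
    simp only [kernelMatrix, Matrix.of_apply, Fin.snoc_castSucc, Fin.snoc_last, dotProduct,
      Matrix.mulVec, Finset.mul_sum]
    congr 1
    refine Finset.sum_congr rfl fun j _ => Finset.sum_congr rfl fun i _ => ?_
    ring
  have integrable_term (j i : Fin n) : Integrable
      (fun t => A.adjugate j i * (projKernel φ (x i) t * projKernel φ t (x j))) μ :=
    (integrable_projKernel_mul_projKernel hmeas horth _ _).const_mul _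
  simp only [bordered]
  rw [integral_sub ((integrable_projKernel_diag hmeas horth).mul_const _)
      (integrable_finsetSum _ fun j _ => integrable_finsetSum _ fun i _ => integrable_term j i),
    integral_mul_const, integral_projKernel_diag hmeas horth,
    integral_finsetSum _ fun j _ => integrable_finsetSum _ fun i _ => integrable_term j i]
  simp only [integral_finsetSum _ fun i _ => integrable_term _ i, integral_const_mul,
    integral_projKernel_mul_projKernel hmeas horth]
  have trace_identity : ∑ j, ∑ i, A.adjugate j i * projKernel φ (x i) (x j) = n * A.det := by
    have trace_adjugate_mul := A.trace_adjugate_mul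
    rw [Fintype.card_fin] at trace_adjugate_mul
    exact trace_adjugate_mul
  rw [trace_identity]
  ring

end Orthonormal

end ProjectionKernel

theorem stmt_2_general {S : Type*} [MeasurableSpace S] (μ : Measure S)
    (n : ℕ) (φ : Fin (n + 1) → S → ℂ) (hmeas : ∀ i, Measurable (φ i))
    (horth : ∀ i j, ∫ x, φ i x * (starRingEnd ℂ) (φ j x) ∂μ = if i = j then 1 else 0)
    (K : S → S → ℂ)
    (hK : ∀ x y, K x y = ∑ k : Fin (n + 1), φ k x * (starRingEnd ℂ) (φ k y))
    (x : Fin n → S) :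
    ∫ t, Matrix.det (Matrix.of fun i j : Fin (n + 1) =>
        K ((Fin.snoc x t : Fin (n + 1) → S) i) ((Fin.snoc x t : Fin (n + 1) → S) j)) ∂μ
      = Matrix.det (Matrix.of fun i j : Fin n => K (x i) (x j)) := by
  obtain rfl : K = projKernel φ := funext fun a => funext fun b => hK a b
  have h := integral_det_kernelMatrix_snoc (fun i => (hmeas i).aestronglyMeasurable) horth x
  rw [Fintype.card_fin, Nat.cast_succ, add_sub_cancel_left, one_mul] at h
  exact h

theorem stmt_2 {S : Type*} [MeasurableSpace S] (μ : Measure S) [SigmaFinite μ]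
    (n : ℕ) (φ : Fin (n + 1) → S → ℂ) (hmeas : ∀ i, Measurable (φ i))
    (horth : ∀ i j, ∫ x, φ i x * (starRingEnd ℂ) (φ j x) ∂μ = if i = j then 1 else 0)
    (K : S → S → ℂ)
    (hK : ∀ x y, K x y = ∑ k : Fin (n + 1), φ k x * (starRingEnd ℂ) (φ k y))
    (x : Fin n → S) :
    ∫ t, Matrix.det (Matrix.of fun i j : Fin (n + 1) =>
        K ((Fin.snoc x t : Fin (n + 1) → S) i) ((Fin.snoc x t : Fin (n + 1) → S) j)) ∂μ
      = Matrix.det (Matrix.of fun i j : Fin n => K (x i) (x j)) :=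
  stmt_2_general μ n φ hmeas horth K hK x
end

section
/- Let (E, ℱ, μ) be a measure space and let φ_1, …, φ_{n+1} : E → ℂ be measurable functions that are orthonormal, i.e. ∫_E φ_i(x) · conj(φ_j(x)) dμ(x) = δ_{ij}. For x ∈ E^n write K_n(x) for the matrix (φ_i(x_j))_{1 ≤ i,j ≤ n}, and for y ∈ E^{n+1} and 1 ≤ k ≤ n+1 write ŷ_k ∈ E^n for the vector obtained by deleting the k-th coordinate of y. Let 𝒜 ⊆ E^n be a measurable set invariant under all permutations of coordinates. Then (1/n!) ∫_𝒜 |det(K_n(x))|² dμ^{⊗n}(x) ≥ (1/(n+1)!) ∫_{E^{n+1}} | Σ_{k : ŷ_k ∈ 𝒜} (−1)^k · φ_{n+1}(y_k) · det(K_n(ŷ_k)) |² dμ^{⊗(n+1)}(y). -/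
/-!
Write `A_k(y) = (-1)^(k+1) φ_{n+1}(y_k) F(ŷ_k)` with `F = 1_𝒜 · det K_n`, which is alternating
because `𝒜` is symmetric. Expanding `|∑_k A_k|²`, each diagonal term integrates to `‖F‖²` by
Fubini and `‖φ_{n+1}‖ = 1`. For `k ≠ l`, separating the variables `y_k`, `y_l` from the remaining
ones `z` and moving them to the front of `F` turns the cross term into
`-∫ |∫ φ_{n+1}(u) conj F(u, z) dμ(u)|² dz ≤ 0`. Hence the left-hand integral is at most
`(n+1) ‖F‖²`, and `(n+1)! = (n+1) n!`.
-/

open MeasureTheory ComplexConjugate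

lemma Fin.odd_val_add_succAbove_add_val_add_predAbove {m : ℕ} (k : Fin (m + 2))
    (i : Fin (m + 1)) : Odd ((k : ℕ) + k.succAbove i + i + i.predAbove k) := by
  rw [Nat.odd_iff]
  simp only [Fin.succAbove, Fin.predAbove, Fin.lt_def, Fin.val_castSucc, apply_dite Fin.val,
    apply_ite Fin.val, Fin.val_succ, Fin.val_pred, Fin.coe_castPred]
  split_ifs <;> omega

lemma apply_insertNth_eq_neg_one_pow_mul_apply_cons {α R : Type*} [CommRing R] {m : ℕ}
    {F : (Fin (m + 1) → α) → R}
    (hF : ∀ (σ : Equiv.Perm (Fin (m + 1))) x, F (x ∘ σ) = (Equiv.Perm.sign σ : ℤ) * F x)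
    (c : Fin (m + 1)) (u : α) (z : Fin m → α) :
    F (c.insertNth u z) = (-1) ^ (c : ℕ) * F (Fin.cons u z) := by
  rw [← Fin.cons_comp_cycleRange, hF, Fin.sign_cycleRange]
  push_cast
  rfl

lemma indicator_det_apply_comp_perm {α R : Type*} [CommRing R] {n : ℕ} (v : Fin n → α → R)
    {s : Set (Fin n → α)} (hs : ∀ (σ : Equiv.Perm (Fin n)) x, x ∈ s → x ∘ σ ∈ s)
    (σ : Equiv.Perm (Fin n)) (x : Fin n → α) :
    s.indicator (fun x => (Matrix.of fun i j => v i (x j)).det) (x ∘ σ)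
      = ((Equiv.Perm.sign σ : ℤ) : R) *
          s.indicator (fun x => (Matrix.of fun i j => v i (x j)).det) x := by
  have hmem : x ∘ σ ∈ s ↔ x ∈ s :=
    ⟨fun h => by simpa [Function.comp_assoc] using hs σ⁻¹ _ h, hs σ x⟩
  by_cases hx : x ∈ s
  · simp only [Set.indicator_of_mem hx, Set.indicator_of_mem (hmem.2 hx)]
    exact Matrix.det_permute' σ (Matrix.of fun i j => v i (x j))
  · simp [Set.indicator_of_notMem hx, Set.indicator_of_notMem (mt hmem.1 hx)]

namespace MeasureTheory

variable {α β 𝕜 : Type*} [MeasurableSpace α] [MeasurableSpace β] [RCLike 𝕜]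
  {μ : Measure α} {ν : Measure β}

lemma MemLp.integrable_mul_conj_s12 {f g : α → 𝕜} (hf : MemLp f 2 μ) (hg : MemLp g 2 μ) :
    Integrable (fun x => f x * conj (g x)) μ :=
  hf.integrable_mul hg.star

lemma integral_mul_conj_self (f : α → 𝕜) :
    ∫ x, f x * conj (f x) ∂μ = ((∫ x, ‖f x‖ ^ 2 ∂μ : ℝ) : 𝕜) := by
  simp_rw [RCLike.mul_conj]
  exact_mod_cast integral_ofReal (𝕜 := 𝕜)

lemma integral_norm_sum_sq_le_of_re_integral_mul_conj_nonpos {ι : Type*} [Fintype ι]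
    {f : ι → α → 𝕜} (hf : ∀ i, MemLp (f i) 2 μ)
    (hcross : ∀ i j, i ≠ j → RCLike.re (∫ x, f i x * conj (f j x) ∂μ) ≤ 0) :
    ∫ x, ‖∑ i, f i x‖ ^ 2 ∂μ ≤ ∑ i, ∫ x, ‖f i x‖ ^ 2 ∂μ := by
  classical
  have hexpand : ∫ x, ‖∑ i, f i x‖ ^ 2 ∂μ
      = ∑ i, ∑ j, RCLike.re (∫ x, f i x * conj (f j x) ∂μ) := by
    rw [← RCLike.ofReal_re (K := 𝕜) (∫ x, ‖∑ i, f i x‖ ^ 2 ∂μ), ← integral_mul_conj_self]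
    simp_rw [map_sum, Finset.sum_mul_sum]
    rw [integral_finsetSum _ fun i _ => integrable_finsetSum _ fun j _ =>
      (hf i).integrable_mul_conj_s12 (hf j)]
    simp_rw [integral_finsetSum _ fun j _ => (hf _).integrable_mul_conj_s12 (hf j), map_sum]
  have hdiag : ∀ i, RCLike.re (∫ x, f i x * conj (f i x) ∂μ) = ∫ x, ‖f i x‖ ^ 2 ∂μ := by
    intro i
    rw [integral_mul_conj_self, RCLike.ofReal_re]
  rw [hexpand]
  refine Finset.sum_le_sum fun i _ => ?_
  rw [← Finset.add_sum_erase _ _ (Finset.mem_univ i), hdiag]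
  exact add_le_of_nonpos_right <| Finset.sum_nonpos fun j hj =>
    hcross i j (Finset.ne_of_mem_erase hj).symm

lemma MemLp.mul_prod [SFinite ν] {f : α → 𝕜} {g : β → 𝕜} (hf : MemLp f 2 μ)
    (hg : MemLp g 2 ν) : MemLp (fun p : α × β => f p.1 * g p.2) 2 (μ.prod ν) := by
  refine (memLp_two_iff_integrable_sq_norm (f := fun p : α × β => f p.1 * g p.2)
    (hf.1.comp_fst.mul hg.1.comp_snd)).2 ?_
  simp only [norm_mul, mul_pow]
  exact (hf.integrable_norm_pow two_ne_zero).mul_prod (hg.integrable_norm_pow two_ne_zero)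

lemma memLp_two_pi_prod [SigmaFinite μ] {n : ℕ} {f : Fin n → α → 𝕜}
    (hf : ∀ j, MemLp (f j) 2 μ) :
    MemLp (fun x : Fin n → α => ∏ j, f j (x j)) 2 (Measure.pi fun _ => μ) := by
  have hmeas : AEStronglyMeasurable (fun x : Fin n → α => ∏ j, f j (x j))
      (Measure.pi fun _ => μ) :=
    Finset.aestronglyMeasurable_fun_prod _ fun j _ =>
      (hf j).1.comp_quasiMeasurePreserving (Measure.quasiMeasurePreserving_eval _ j)
  refine (memLp_two_iff_integrable_sq_norm hmeas).2 ?_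
  simp_rw [norm_prod, ← Finset.prod_pow]
  exact Integrable.fin_nat_prod fun j => (hf j).integrable_norm_pow two_ne_zero

lemma memLp_two_det [SigmaFinite μ] {n : ℕ} {v : Fin n → α → 𝕜} (hv : ∀ i, MemLp (v i) 2 μ) :
    MemLp (fun x : Fin n → α => (Matrix.of fun i j => v i (x j)).det) 2
      (Measure.pi fun _ => μ) := by
  simp_rw [Matrix.det_apply', Matrix.of_apply]
  exact memLp_finsetSum _ fun σ _ => (memLp_two_pi_prod fun j => hv (σ j)).const_mul _

lemma integral_prod_prod_mul_conj [SFinite μ] [SFinite ν] {f : α → β → 𝕜}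
    (hf : Integrable (fun p : α × α × β => f p.1 p.2.2 * conj (f p.2.1 p.2.2))
      (μ.prod (μ.prod ν))) :
    ∫ p, f p.1 p.2.2 * conj (f p.2.1 p.2.2) ∂(μ.prod (μ.prod ν))
      = ((∫ z, ‖∫ u, f u z ∂μ‖ ^ 2 ∂ν : ℝ) : 𝕜) := by
  set H : β → 𝕜 := fun z => ∫ u, f u z ∂μ
  have hinner : ∀ q : α × β,
      ∫ u, f u q.2 * conj (f q.1 q.2) ∂μ = H q.2 * conj (f q.1 q.2) :=
    fun q => integral_mul_const _ _
  have hH : Integrable (fun q : α × β => H q.2 * conj (f q.1 q.2)) (μ.prod ν) := by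
    simpa only [hinner] using hf.integral_prod_right
  calc _ = ∫ q : α × β, H q.2 * conj (f q.1 q.2) ∂(μ.prod ν) := by
        rw [integral_prod_symm _ hf]
        simp only [hinner]
    _ = ∫ z, H z * conj (H z) ∂ν := by
        rw [integral_prod_symm _ hH]
        simp only [integral_const_mul, integral_conj]
        rfl
    _ = _ := integral_mul_conj_self H

end MeasureTheory

section Wedge

variable {E 𝕜 : Type*} [RCLike 𝕜]

/-- For `F = det K_n` this is, up to a global sign, the `k`-th term of the Laplace expansion of
`det K_{n+1}` along its last row. -/
def wedgeTerm {n : ℕ} (ψ : E → 𝕜) (F : (Fin n → E) → 𝕜) (k : Fin (n + 1))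
    (y : Fin (n + 1) → E) : 𝕜 :=
  (-1) ^ ((k : ℕ) + 1) * ψ (y k) * F (k.removeNth y)

variable {ψ : E → 𝕜}

/-- Both `ŷ_k` and `ŷ_l` are obtained by inserting one variable into the same `z`; moving it to
the front costs signs whose product with `(-1)^(k+l)` is `-1`. -/
lemma wedgeTerm_mul_conj_wedgeTerm_succAbove {m : ℕ} {F : (Fin (m + 1) → E) → 𝕜}
    (hF : ∀ (σ : Equiv.Perm (Fin (m + 1))) x, F (x ∘ σ) = (Equiv.Perm.sign σ : ℤ) * F x)
    (k : Fin (m + 2)) (i : Fin (m + 1)) (y : Fin (m + 2) → E) :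
    wedgeTerm ψ F k y * conj (wedgeTerm ψ F (k.succAbove i) y)
      = -(ψ (y k) * conj (F (Fin.cons (y k) (i.removeNth (k.removeNth y)))) *
          conj (ψ (y (k.succAbove i)) *
            conj (F (Fin.cons (y (k.succAbove i)) (i.removeNth (k.removeNth y)))))) := by
  set z := i.removeNth (k.removeNth y)
  have hk : k.removeNth y = i.insertNth (y (k.succAbove i)) z :=
    (Fin.insertNth_self_removeNth i _).symm
  have hl : (k.succAbove i).removeNth y = (i.predAbove k).insertNth (y k) z := by
    rw [← Fin.insertNth_self_removeNth (i.predAbove k) ((k.succAbove i).removeNth y),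
      ← Fin.removeNth_removeNth_eq_swap, Fin.removeNth_apply, Fin.succAbove_succAbove_predAbove]
  have hsign := (Fin.odd_val_add_succAbove_add_val_add_predAbove k i).neg_one_pow (α := 𝕜)
  simp only [wedgeTerm, hk, hl, apply_insertNth_eq_neg_one_pow_mul_apply_cons hF, map_mul,
    map_pow, map_neg, map_one, RCLike.conj_conj]
  linear_combination (ψ (y k) * conj (F (Fin.cons (y k) z)) * conj (ψ (y (k.succAbove i))) *
    F (Fin.cons (y (k.succAbove i)) z)) * hsign

variable [MeasurableSpace E] {μ : Measure E} [SigmaFinite μ]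

lemma wedgeTerm_eq_comp_piFinSuccAbove {n : ℕ} (F : (Fin n → E) → 𝕜) (k : Fin (n + 1)) :
    wedgeTerm ψ F k = (fun p : E × (Fin n → E) => (-1) ^ ((k : ℕ) + 1) * (ψ p.1 * F p.2)) ∘
      MeasurableEquiv.piFinSuccAbove (fun _ => E) k := by
  ext y
  simp only [wedgeTerm, mul_assoc]
  rfl

lemma memLp_wedgeTerm {n : ℕ} {F : (Fin n → E) → 𝕜} (hψ : MemLp ψ 2 μ)
    (hF : MemLp F 2 (Measure.pi fun _ => μ)) (k : Fin (n + 1)) :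
    MemLp (wedgeTerm ψ F k) 2 (Measure.pi fun _ => μ) := by
  rw [wedgeTerm_eq_comp_piFinSuccAbove]
  exact ((hψ.mul_prod hF).const_mul _).comp_measurePreserving
    (measurePreserving_piFinSuccAbove _ k)

lemma integral_norm_wedgeTerm_sq {n : ℕ} (F : (Fin n → E) → 𝕜) (k : Fin (n + 1)) :
    ∫ y, ‖wedgeTerm ψ F k y‖ ^ 2 ∂(Measure.pi fun _ => μ)
      = (∫ u, ‖ψ u‖ ^ 2 ∂μ) * ∫ x, ‖F x‖ ^ 2 ∂(Measure.pi fun _ => μ) := by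
  rw [← integral_prod_mul, ← (measurePreserving_piFinSuccAbove (fun _ => μ) k).integral_comp']
  congr with y
  simp [wedgeTerm, mul_pow]

lemma integral_wedgeTerm_mul_conj_wedgeTerm_succAbove {m : ℕ} {F : (Fin (m + 1) → E) → 𝕜}
    (hψ : MemLp ψ 2 μ) (hF : MemLp F 2 (Measure.pi fun _ => μ))
    (hFalt : ∀ (σ : Equiv.Perm (Fin (m + 1))) x, F (x ∘ σ) = (Equiv.Perm.sign σ : ℤ) * F x)
    (k : Fin (m + 2)) (i : Fin (m + 1)) :
    ∫ y, wedgeTerm ψ F k y * conj (wedgeTerm ψ F (k.succAbove i) y) ∂(Measure.pi fun _ => μ)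
      = -((∫ z, ‖∫ u, ψ u * conj (F (Fin.cons u z)) ∂μ‖ ^ 2
            ∂(Measure.pi fun _ => μ) : ℝ) : 𝕜) := by
  let e := (MeasurableEquiv.piFinSuccAbove (fun _ => E) k).trans
    ((MeasurableEquiv.refl E).prodCongr (MeasurableEquiv.piFinSuccAbove (fun _ => E) i))
  have he : MeasurePreserving e (Measure.pi fun _ => μ)
      (μ.prod (μ.prod (Measure.pi fun _ : Fin m => μ))) :=
    ((MeasurePreserving.id μ).prod (measurePreserving_piFinSuccAbove (fun _ => μ) i)).comp
      (measurePreserving_piFinSuccAbove (fun _ => μ) k)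
  let G : E × E × (Fin m → E) → 𝕜 := fun p =>
    ψ p.1 * conj (F (Fin.cons p.1 p.2.2)) * conj (ψ p.2.1 * conj (F (Fin.cons p.2.1 p.2.2)))
  have hpt : (fun y => wedgeTerm ψ F k y * conj (wedgeTerm ψ F (k.succAbove i) y))
      = fun y => -G (e y) :=
    funext (wedgeTerm_mul_conj_wedgeTerm_succAbove hFalt k i)
  have hG : Integrable G (μ.prod (μ.prod (Measure.pi fun _ : Fin m => μ))) := by
    refine (he.integrable_comp_emb e.measurableEmbedding).1 ?_
    simpa [hpt, Function.comp_def] using ((memLp_wedgeTerm hψ hF k).integrable_mul_conj_s12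
      (memLp_wedgeTerm hψ hF (k.succAbove i))).neg
  rw [hpt, integral_neg, he.integral_comp' G]
  exact congrArg Neg.neg
    (integral_prod_prod_mul_conj (f := fun u z => ψ u * conj (F (Fin.cons u z))) hG)

theorem integral_norm_sum_wedgeTerm_sq_le {n : ℕ} {F : (Fin n → E) → 𝕜}
    (hψ : MemLp ψ 2 μ) (hF : MemLp F 2 (Measure.pi fun _ => μ))
    (hFalt : ∀ (σ : Equiv.Perm (Fin n)) x, F (x ∘ σ) = (Equiv.Perm.sign σ : ℤ) * F x) :
    ∫ y, ‖∑ k, wedgeTerm ψ F k y‖ ^ 2 ∂(Measure.pi fun _ => μ)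
      ≤ (n + 1) * ((∫ u, ‖ψ u‖ ^ 2 ∂μ) * ∫ x, ‖F x‖ ^ 2 ∂(Measure.pi fun _ => μ)) := by
  have hcross : ∀ k l : Fin (n + 1), k ≠ l → RCLike.re
      (∫ y, wedgeTerm ψ F k y * conj (wedgeTerm ψ F l y) ∂(Measure.pi fun _ => μ)) ≤ 0 := by
    intro k l hkl
    rcases n with _ | m
    · exact absurd (Subsingleton.elim (α := Fin 1) k l) hkl
    · obtain ⟨i, rfl⟩ := Fin.exists_succAbove_eq hkl.symm
      rw [integral_wedgeTerm_mul_conj_wedgeTerm_succAbove hψ hF hFalt, map_neg,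
        RCLike.ofReal_re, neg_nonpos]
      exact integral_nonneg fun _ => by positivity
  calc _ ≤ ∑ k : Fin (n + 1), ∫ y, ‖wedgeTerm ψ F k y‖ ^ 2 ∂(Measure.pi fun _ => μ) :=
        integral_norm_sum_sq_le_of_re_integral_mul_conj_nonpos (memLp_wedgeTerm hψ hF) hcross
    _ = _ := by simp [integral_norm_wedgeTerm_sq]

end Wedge

theorem stmt_12 {E : Type*} [MeasurableSpace E] (μ : Measure E) [SigmaFinite μ]
    (n : ℕ) (φ : Fin (n + 1) → E → ℂ) (hmeas : ∀ i, Measurable (φ i))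
    (horth : ∀ i j, ∫ x, φ i x * (starRingEnd ℂ) (φ j x) ∂μ = if i = j then 1 else 0)
    (𝒜 : Set (Fin n → E)) (h𝒜m : MeasurableSet 𝒜)
    (h𝒜sym : ∀ (σ : Equiv.Perm (Fin n)) (x : Fin n → E), x ∈ 𝒜 → x ∘ σ ∈ 𝒜) :
    (1 / ((n + 1).factorial : ℝ)) *
        ∫ y : Fin (n + 1) → E,
          ‖∑ k : Fin (n + 1), Set.indicator 𝒜
              (fun x => (-1 : ℂ) ^ ((k : ℕ) + 1) * φ (Fin.last n) (y k) *
                Matrix.det (Matrix.of fun i j : Fin n => φ (Fin.castSucc i) (x j)))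
              (fun i => y (k.succAbove i))‖ ^ 2
          ∂(Measure.pi fun _ : Fin (n + 1) => μ)
      ≤ (1 / (n.factorial : ℝ)) *
          ∫ x in 𝒜, ‖Matrix.det (Matrix.of fun i j : Fin n =>
            φ (Fin.castSucc i) (x j))‖ ^ 2 ∂(Measure.pi fun _ : Fin n => μ) := by
  set D : (Fin n → E) → ℂ := fun x => (Matrix.of fun i j : Fin n => φ i.castSucc (x j)).det
  have hnorm : ∀ i, ∫ x, ‖φ i x‖ ^ 2 ∂μ = 1 := fun i => by
    have h := horth i i
    rw [if_pos rfl, integral_mul_conj_self] at h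
    simpa using congrArg RCLike.re h
  have hφ : ∀ i, MemLp (φ i) 2 μ := fun i =>
    (memLp_two_iff_integrable_sq_norm (hmeas i).aestronglyMeasurable).2
      (Integrable.of_integral_ne_zero (by simp [hnorm]))
  have hsummand : ∀ (k : Fin (n + 1)) (y : Fin (n + 1) → E), Set.indicator 𝒜
      (fun x => (-1 : ℂ) ^ ((k : ℕ) + 1) * φ (Fin.last n) (y k) *
        (Matrix.of fun i j : Fin n => φ i.castSucc (x j)).det)
      (fun i => y (k.succAbove i)) = wedgeTerm (φ (Fin.last n)) (𝒜.indicator D) k y :=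
    fun k y => Set.indicator_mul_right _ (fun _ => _) _
  have hindicator : ∫ x, ‖𝒜.indicator D x‖ ^ 2 ∂(Measure.pi fun _ => μ)
      = ∫ x in 𝒜, ‖D x‖ ^ 2 ∂(Measure.pi fun _ => μ) := by
    rw [← integral_indicator h𝒜m]
    congr with x
    by_cases hx : x ∈ 𝒜 <;> simp [hx]
  have hwedge := integral_norm_sum_wedgeTerm_sq_le (hφ (Fin.last n))
    ((memLp_two_det fun i => hφ i.castSucc).indicator h𝒜m)
    (indicator_det_apply_comp_perm (fun i => φ i.castSucc) h𝒜sym)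
  rw [hnorm, one_mul, hindicator] at hwedge
  simp only [hsummand]
  calc _ ≤ 1 / ((n + 1).factorial : ℝ) *
          ((n + 1) * ∫ x in 𝒜, ‖D x‖ ^ 2 ∂(Measure.pi fun _ => μ)) := by
        gcongr
    _ = 1 / (n.factorial : ℝ) * ∫ x in 𝒜, ‖D x‖ ^ 2 ∂(Measure.pi fun _ => μ) := by
        rw [Nat.factorial_succ]
        push_cast
        field_simp
end

section
/- For integers n ≥ 2, n_1 ≥ n, n_2 ≥ n, and every t ∈ [0,1], the following inequality between normalized integrals holds: [∫_{[0,t]^{n-1}} ∏_{1≤i<j≤n-1} (x_i − x_j)² · ∏_{i=1}^{n-1} x_i^{n_1−n+2} (1−x_i)^{n_2−n} dx] / [∫_{[0,1]^{n-1}} ∏_{1≤i<j≤n-1} (x_i − x_j)² · ∏_{i=1}^{n-1} x_i^{n_1−n+2} (1−x_i)^{n_2−n} dx] ≥ [∫_{[0,t]^{n}} ∏_{1≤i<j≤n} (x_i − x_j)² · ∏_{i=1}^{n} x_i^{n_1−n} (1−x_i)^{n_2−n} dx] / [∫_{[0,1]^{n}} ∏_{1≤i<j≤n} (x_i − x_j)²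 · ∏_{i=1}^{n} x_i^{n_1−n} (1−x_i)^{n_2−n} dx]. -/
/-!
By Heine's (Andréief's) identity, `jacobiInt m a b [0, t] = m! · det H_t`, where `H_t` is the
Hankel matrix of the moments of `x^a (1-x)^b` on `[0, t]`; deleting the first row and column of
`H_t` gives the moment matrix of `x^(a+2) (1-x)^b`. Since `H_t ≤ H_1` in the Loewner order and
matrix inversion is antitone on positive definite matrices, `(H_1⁻¹)₀₀ ≤ (H_t⁻¹)₀₀`, and by
Cramer's rule these entries are the ratios of the corner minors to the determinants, which
rearranges to the claim.
-/

open MeasureTheory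

/-- The (unnormalized) Jacobi-type integral: `m` eigenvalues in `D`, squared Vandermonde,
weight `x^a (1-x)^b`. -/
noncomputable def jacobiInt (m a b : ℕ) (D : Set ℝ) : ℝ :=
  ∫ x in Set.univ.pi (fun _ : Fin m => D),
    ((∏ i : Fin m, ∏ j ∈ Finset.Ioi i, (x i - x j) ^ 2) *
      ∏ i : Fin m, ((x i) ^ a * (1 - x i) ^ b))
    ∂(Measure.pi fun _ : Fin m => volume)

open Matrix Finset Set Equiv
open scoped Nat MatrixOrder

namespace Matrix

theorem sum_perm_sum_perm_sign_mul_prod {R ι : Type*} [CommRing R] [Fintype ι]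
    [DecidableEq ι] (M : Matrix ι ι R) :
    ∑ σ : Perm ι, ∑ τ : Perm ι, ((Perm.sign σ : ℤ) : R) * (Perm.sign τ : ℤ) * ∏ k, M (σ k) (τ k)
      = (Fintype.card ι)! * M.det := by
  have hτ (τ : Perm ι) :
      ∑ σ : Perm ι, ((Perm.sign σ : ℤ) : R) * (Perm.sign τ : ℤ) * ∏ k, M (σ k) (τ k) = M.det := by
    rw [det_apply', ← Equiv.sum_comp (Equiv.mulRight τ)]
    refine sum_congr rfl fun π _ => ?_
    have hsign : ((Perm.sign (π * τ) : ℤ) : R) * (Perm.sign τ : ℤ) = (Perm.sign π : ℤ) := by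
      simp [Perm.sign_mul, mul_assoc, ← Int.cast_mul, ← Units.val_mul]
    rw [coe_mulRight, hsign, ← Equiv.prod_comp τ (fun k => M (π k) k)]
    rfl
  rw [sum_comm, sum_congr rfl fun τ _ => hτ τ, sum_const, card_univ, Fintype.card_perm,
    nsmul_eq_mul]

theorem dotProduct_inv_mulVec_le_of_le {n : Type*} [Fintype n] [DecidableEq n]
    {A B : Matrix n n ℝ} (hA : A.PosDef) (hAB : A ≤ B) (v : n → ℝ) :
    v ⬝ᵥ (B⁻¹ *ᵥ v) ≤ v ⬝ᵥ (A⁻¹ *ᵥ v) := by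
  have hB : B.PosDef := by simpa using hA.add_posSemidef (le_iff.mp hAB)
  set p := A⁻¹ *ᵥ v
  set q := B⁻¹ *ᵥ v
  have hAp : A *ᵥ p = v := by simp [p, mulVec_mulVec, mul_nonsing_inv _ hA.det_pos.ne'.isUnit]
  have hBq : B *ᵥ q = v := by simp [q, mulVec_mulVec, mul_nonsing_inv _ hB.det_pos.ne'.isUnit]
  have hApq : p ⬝ᵥ (A *ᵥ q) = q ⬝ᵥ v := by
    have hAT : Aᵀ = A := (conjTranspose_eq_transpose_of_trivial A).symm.trans hA.isHermitian.eq
    rw [dotProduct_mulVec, ← mulVec_transpose, hAT, hAp, dotProduct_comm]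
  -- `q ⬝ A q ≤ q ⬝ B q = q ⬝ v` and `0 ≤ (p - q) ⬝ A (p - q) = p ⬝ v - 2 q ⬝ v + q ⬝ A q`
  have hle : q ⬝ᵥ (A *ᵥ q) ≤ q ⬝ᵥ v := by
    simpa [sub_mulVec, hBq] using (le_iff.mp hAB).dotProduct_mulVec_nonneg q
  have hnonneg := hA.posSemidef.dotProduct_mulVec_nonneg (p - q)
  simp only [star_trivial, mulVec_sub, dotProduct_sub, sub_dotProduct, hAp, hApq] at hnonneg
  rw [dotProduct_comm v p, dotProduct_comm v q]
  linarith

theorem inv_apply_zero_zero {K : Type*} [Field K] {m : ℕ}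
    (A : Matrix (Fin (m + 1)) (Fin (m + 1)) K) :
    A⁻¹ 0 0 = (A.submatrix Fin.succ Fin.succ).det / A.det := by
  rw [inv_def, smul_apply, adjugate_fin_succ_eq_det_submatrix, Ring.inverse_eq_inv']
  simp [div_eq_inv_mul]

theorem det_div_det_le_det_submatrix_div_det {m : ℕ} {A B : Matrix (Fin (m + 1)) (Fin (m + 1)) ℝ}
    (hA : A.PosSemidef) (hB : B.PosDef) (hAB : A ≤ B) :
    A.det / B.det ≤ (A.submatrix Fin.succ Fin.succ).det / (B.submatrix Fin.succ Fin.succ).det := by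
  have hB' := (hB.submatrix (Fin.succ_injective m)).det_pos
  by_cases hApd : A.PosDef
  · have h := dotProduct_inv_mulVec_le_of_le hApd hAB (Pi.single 0 1)
    simp only [mulVec_single_one, single_one_dotProduct, col_apply, inv_apply_zero_zero] at h
    rw [div_le_div_iff₀ hB.det_pos hApd.det_pos] at h
    rw [div_le_div_iff₀ hB.det_pos hB']
    linarith
  · rw [hA.posDef_iff_det_ne_zero, not_not] at hApd
    rw [hApd, zero_div]
    exact div_nonneg (hA.submatrix _).det_nonneg hB'.le

end Matrix

/-- Andréief's identity. -/
theorem integral_det_mul_det {𝕜 ι α : Type*} [RCLike 𝕜] [Fintype ι] [DecidableEq ι]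
    [MeasurableSpace α] (μ : Measure α) [SigmaFinite μ] (f g : ι → α → 𝕜)
    (hfg : ∀ i j, Integrable (fun s => f i s * g j s) μ) :
    ∫ x, (of fun i k => f i (x k)).det * (of fun j k => g j (x k)).det ∂(Measure.pi fun _ => μ)
      = (Fintype.card ι)! * (of fun i j => ∫ s, f i s * g j s ∂μ).det := by
  have hexpand (x : ι → α) :
      (of fun i k => f i (x k)).det * (of fun j k => g j (x k)).det
        = ∑ σ : Perm ι, ∑ τ : Perm ι, ((Perm.sign σ : ℤ) : 𝕜) * (Perm.sign τ : ℤ) *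
            ∏ k, f (σ k) (x k) * g (τ k) (x k) := by
    simp only [det_apply', of_apply, sum_mul_sum, prod_mul_distrib]
    exact sum_congr rfl fun σ _ => sum_congr rfl fun τ _ => by ring
  have hint (σ τ : Perm ι) : Integrable (fun x : ι → α => ∏ k, f (σ k) (x k) * g (τ k) (x k))
      (Measure.pi fun _ => μ) :=
    Integrable.fintype_prod (f := fun k s => f (σ k) s * g (τ k) s) fun k => hfg _ _
  simp_rw [hexpand]
  rw [integral_finsetSum _ fun σ _ => integrable_finsetSum _ fun τ _ => (hint σ τ).const_mul _]
  simp_rw [integral_finsetSum _ fun τ _ => (hint _ τ).const_mul _, integral_const_mul]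
  rw [← sum_perm_sum_perm_sign_mul_prod]
  refine sum_congr rfl fun σ _ => sum_congr rfl fun τ _ => ?_
  rw [integral_fintype_prod_eq_prod (f := fun k s => f (σ k) s * g (τ k) s)]
  rfl

noncomputable def momentMatrix (μ : Measure ℝ) (w : ℝ → ℝ) (m : ℕ) : Matrix (Fin m) (Fin m) ℝ :=
  of fun i j => ∫ s, s ^ ((i : ℕ) + j) * w s ∂μ

section Moments

variable {μ ν : Measure ℝ} {w : ℝ → ℝ} {m : ℕ}

theorem sq_sum_mul_pow_mul (v : Fin m → ℝ) (s : ℝ) :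
    (∑ i, v i * s ^ (i : ℕ)) ^ 2 * w s = ∑ i, ∑ j, v i * v j * (s ^ ((i : ℕ) + j) * w s) := by
  rw [sq, sum_mul_sum, sum_mul]
  refine sum_congr rfl fun i _ => ?_
  rw [sum_mul]
  exact sum_congr rfl fun j _ => by ring

theorem integrable_sq_sum_mul_pow_mul (hw : ∀ k, Integrable (fun s => s ^ k * w s) μ)
    (v : Fin m → ℝ) : Integrable (fun s => (∑ i, v i * s ^ (i : ℕ)) ^ 2 * w s) μ := by
  simp_rw [sq_sum_mul_pow_mul]
  exact integrable_finsetSum _ fun i _ => integrable_finsetSum _ fun j _ => (hw _).const_mul _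

theorem finite_setOf_sum_mul_pow_eq_zero {v : Fin m → ℝ} (hv : v ≠ 0) :
    {s : ℝ | ∑ i, v i * s ^ (i : ℕ) = 0}.Finite := by
  set p : Polynomial ℝ := ∑ i, Polynomial.C (v i) * Polynomial.X ^ (i : ℕ)
  have hp : p ≠ 0 := by
    refine fun h => hv (funext fun i => ?_)
    simpa [p, Polynomial.finsetSum_coeff, Polynomial.coeff_C_mul_X_pow, Fin.val_inj] using
      congrArg (Polynomial.coeff · i) h
  convert Polynomial.finite_setOfPred_isRoot hp using 2
  simp [p, Polynomial.eval_finsetSum]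

theorem momentMatrix.isHermitian : (momentMatrix μ w m).IsHermitian := by
  ext i j
  simp [momentMatrix, add_comm]

theorem momentMatrix.submatrix_succ :
    (momentMatrix μ w (m + 1)).submatrix Fin.succ Fin.succ
      = momentMatrix μ (fun s => s ^ 2 * w s) m := by
  ext i j
  simp only [momentMatrix, submatrix_apply, of_apply, Fin.val_succ]
  congr 1 with s
  ring

theorem momentMatrix.dotProduct_mulVec (hw : ∀ k, Integrable (fun s => s ^ k * w s) μ)
    (v : Fin m → ℝ) :
    v ⬝ᵥ (momentMatrix μ w m *ᵥ v) = ∫ s, (∑ i, v i * s ^ (i : ℕ)) ^ 2 * w s ∂μ := by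
  simp_rw [sq_sum_mul_pow_mul]
  rw [integral_finsetSum _ fun i _ => integrable_finsetSum _ fun j _ => (hw _).const_mul _]
  simp_rw [integral_finsetSum _ fun j _ => (hw _).const_mul _, integral_const_mul]
  simp only [_root_.dotProduct, mulVec, momentMatrix, of_apply, mul_sum]
  exact sum_congr rfl fun i _ => sum_congr rfl fun j _ => by ring

theorem momentMatrix.posSemidef (hw : ∀ k, Integrable (fun s => s ^ k * w s) μ) (hw0 : 0 ≤ᵐ[μ] w) :
    (momentMatrix μ w m).PosSemidef :=
  .of_dotProduct_mulVec_nonneg isHermitian fun v => by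
    rw [star_trivial, dotProduct_mulVec hw]
    exact integral_nonneg_of_ae (hw0.mono fun s hs => mul_nonneg (sq_nonneg _) hs)

theorem momentMatrix.mono_measure (hμν : μ ≤ ν) (hw : ∀ k, Integrable (fun s => s ^ k * w s) ν)
    (hw0 : 0 ≤ᵐ[ν] w) : momentMatrix μ w m ≤ momentMatrix ν w m := by
  have hwμ (k : ℕ) : Integrable (fun s => s ^ k * w s) μ := (hw k).mono_measure hμν
  refine le_iff.mpr (.of_dotProduct_mulVec_nonneg (isHermitian.sub isHermitian) fun v => ?_)
  rw [star_trivial, sub_mulVec, dotProduct_sub, dotProduct_mulVec hw, dotProduct_mulVec hwμ,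
    sub_nonneg]
  exact integral_mono_measure hμν (hw0.mono fun s hs => mul_nonneg (sq_nonneg _) hs)
    (integrable_sq_sum_mul_pow_mul hw v)

theorem momentMatrix.posDef_restrict_Icc {c d : ℝ} (hcd : c < d)
    (hw : ContinuousOn w (Icc c d)) (hw0 : ∀ s ∈ Icc c d, 0 ≤ w s)
    (hpos : ∀ s ∈ Ioo c d, 0 < w s) : (momentMatrix (volume.restrict (Icc c d)) w m).PosDef := by
  have hint (k : ℕ) : Integrable (fun s => s ^ k * w s) (volume.restrict (Icc c d)) :=
    ((continuousOn_pow k).mul hw).integrableOn_Icc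
  refine .of_dotProduct_mulVec_pos isHermitian fun v hv => ?_
  rw [star_trivial, dotProduct_mulVec hint]
  have hnonneg : 0 ≤ᵐ[volume.restrict (Icc c d)] fun s => (∑ i, v i * s ^ (i : ℕ)) ^ 2 * w s :=
    (ae_restrict_mem measurableSet_Icc).mono fun s hs => mul_nonneg (sq_nonneg _) (hw0 s hs)
  rw [setIntegral_pos_iff_support_of_nonneg_ae hnonneg (integrable_sq_sum_mul_pow_mul hint v)]
  have hsupp : Ioo c d \ {s | ∑ i, v i * s ^ (i : ℕ) = 0}
      ⊆ Function.support (fun s => (∑ i, v i * s ^ (i : ℕ)) ^ 2 * w s) ∩ Icc c d :=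
    fun s ⟨hs, hs0⟩ => ⟨mul_ne_zero (pow_ne_zero 2 hs0) (hpos s hs).ne', Ioo_subset_Icc_self hs⟩
  calc (0 : ENNReal) < volume (Ioo c d \ {s | ∑ i, v i * s ^ (i : ℕ) = 0}) := by
        rw [measure_sdiff_null ((finite_setOf_sum_mul_pow_eq_zero hv).measure_zero _),
          Real.volume_Ioo]
        exact ENNReal.ofReal_pos.mpr (sub_pos.mpr hcd)
    _ ≤ _ := measure_mono hsupp

end Moments

theorem prod_sq_sub_mul_prod_eq_det_mul_det {m : ℕ} (w : ℝ → ℝ) (x : Fin m → ℝ) :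
    (∏ i, ∏ j ∈ Ioi i, (x i - x j) ^ 2) * ∏ i, w (x i)
      = (of fun (i : Fin m) k => x k ^ (i : ℕ)).det
        * (of fun (j : Fin m) k => x k ^ (j : ℕ) * w (x k)).det := by
  have hV : (of fun (i : Fin m) k => x k ^ (i : ℕ)) = (vandermonde x)ᵀ := by ext; simp
  have hVw : (of fun (j : Fin m) k => x k ^ (j : ℕ) * w (x k))
      = of fun j k => w (x k) * (vandermonde x)ᵀ j k := by
    ext; simp [mul_comm]
  have hsq : ∏ i, ∏ j ∈ Ioi i, (x i - x j) ^ 2 = (∏ i, ∏ j ∈ Ioi i, (x j - x i)) ^ 2 := by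
    simp_rw [← Finset.prod_pow]
    exact prod_congr rfl fun i _ => prod_congr rfl fun j _ => by ring
  rw [hVw, det_mul_row, hV, det_transpose, det_vandermonde, hsq]
  ring

theorem jacobiInt_eq_factorial_mul_det (m a b : ℕ) {D : Set ℝ} (hD : IsCompact D) :
    jacobiInt m a b D
      = m ! * (momentMatrix (volume.restrict D) (fun s => s ^ a * (1 - s) ^ b) m).det := by
  have hint (i j : Fin m) :
      Integrable (fun s : ℝ => s ^ (i : ℕ) * (s ^ (j : ℕ) * (s ^ a * (1 - s) ^ b)))
        (volume.restrict D) :=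
    ContinuousOn.integrableOn_compact hD (by fun_prop)
  rw [jacobiInt, Measure.restrict_pi_pi]
  simp_rw [prod_sq_sub_mul_prod_eq_det_mul_det (fun s => s ^ a * (1 - s) ^ b)]
  rw [integral_det_mul_det _ _ _ hint, Fintype.card_fin]
  congr 2 with i j
  simp [momentMatrix, pow_add, mul_assoc]

theorem jacobiInt_Icc_div_le (k a b : ℕ) {t : ℝ} (ht : t ≤ 1) :
    jacobiInt (k + 1) a b (Icc 0 t) / jacobiInt (k + 1) a b (Icc 0 1)
      ≤ jacobiInt k (a + 2) b (Icc 0 t) / jacobiInt k (a + 2) b (Icc 0 1) := by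
  set w : ℝ → ℝ := fun s => s ^ a * (1 - s) ^ b
  have hw2 : (fun s : ℝ => s ^ (a + 2) * (1 - s) ^ b) = fun s => s ^ 2 * w s := by ext; ring
  have hμ : volume.restrict (Icc (0 : ℝ) t) ≤ volume.restrict (Icc 0 1) :=
    Measure.restrict_mono (Icc_subset_Icc_right ht) le_rfl
  have hint (j : ℕ) : Integrable (fun s => s ^ j * w s) (volume.restrict (Icc 0 1)) :=
    (by fun_prop : Continuous _).integrableOn_Icc
  have hw0 : 0 ≤ᵐ[volume.restrict (Icc 0 1)] w :=
    (ae_restrict_mem measurableSet_Icc).mono fun s hs =>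
      mul_nonneg (pow_nonneg hs.1 a) (pow_nonneg (sub_nonneg.mpr hs.2) b)
  have hpsd : (momentMatrix (volume.restrict (Icc 0 t)) w (k + 1)).PosSemidef :=
    momentMatrix.posSemidef (fun j => (hint j).mono_measure hμ) (hw0.filter_mono (ae_mono hμ))
  have hpd : (momentMatrix (volume.restrict (Icc 0 1)) w (k + 1)).PosDef :=
    momentMatrix.posDef_restrict_Icc one_pos (by fun_prop)
      (fun s hs => mul_nonneg (pow_nonneg hs.1 a) (pow_nonneg (sub_nonneg.mpr hs.2) b))
      (fun s hs => mul_pos (pow_pos hs.1 a) (pow_pos (sub_pos.mpr hs.2) b))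
  simp only [jacobiInt_eq_factorial_mul_det _ _ _ isCompact_Icc, hw2,
    ← momentMatrix.submatrix_succ,
    mul_div_mul_left (_ : ℝ) _ (Nat.cast_ne_zero.mpr (Nat.factorial_ne_zero _))]
  exact det_div_det_le_det_submatrix_div_det hpsd hpd (momentMatrix.mono_measure hμ hint hw0)

theorem stmt_17_general (n n₁ n₂ : ℕ)
    (t : ℝ) (ht : t ∈ Set.Icc (0 : ℝ) 1) :
    jacobiInt n (n₁ - n) (n₂ - n) (Set.Icc 0 t)
        / jacobiInt n (n₁ - n) (n₂ - n) (Set.Icc 0 1)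
      ≤ jacobiInt (n - 1) (n₁ - n + 2) (n₂ - n) (Set.Icc 0 t)
          / jacobiInt (n - 1) (n₁ - n + 2) (n₂ - n) (Set.Icc 0 1) := by
  rcases n with _ | k
  · simp [jacobiInt_eq_factorial_mul_det _ _ _ isCompact_Icc]
  · simpa using jacobiInt_Icc_div_le k (n₁ - (k + 1)) (n₂ - (k + 1)) ht.2

theorem stmt_17 (n n₁ n₂ : ℕ) (hn : 2 ≤ n) (h₁ : n ≤ n₁) (h₂ : n ≤ n₂)
    (t : ℝ) (ht : t ∈ Set.Icc (0 : ℝ) 1) :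
    jacobiInt n (n₁ - n) (n₂ - n) (Set.Icc 0 t)
        / jacobiInt n (n₁ - n) (n₂ - n) (Set.Icc 0 1)
      ≤ jacobiInt (n - 1) (n₁ - n + 2) (n₂ - n) (Set.Icc 0 t)
          / jacobiInt (n - 1) (n₁ - n + 2) (n₂ - n) (Set.Icc 0 1) :=
  stmt_17_general n n₁ n₂ t ht
end

section
/- Fix an integer n ≥ 2 and 0 < q < 1. Let W = {h ∈ ℕ^{n-1} : h_1 < h_2 < ⋯ < h_{n-1}} and Δ(h) = ∏_{1≤i<j≤n-1}(h_j − h_i). Define Z_2 = Σ_{h ∈ W} Δ(h)² ∏_{i=1}^{n-1} h_i² q^{h_i} and Z_3 = Σ_{h ∈ W} Δ(h)² ∏_{i=1}^{n-1} (h_i+2)(h_i+1) q^{h_i}. Then for every increasing subset 𝒜 ⊆ W (meaning: if h ∈ 𝒜 and g ∈ W satisfies h_i ≤ g_i for all i, then g ∈ 𝒜), (1/Z_3) Σ_{h ∈ 𝒜} Δ(h)² ∏_{i=1}^{n-1} (h_i+2)(h_i+1) q^{h_i} ≤ (1/Z_2) Σ_{h ∈ 𝒜} Δ(h)² ∏_{i=1}^{n-1}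 h_i² q^{h_i}. -/
/-!
On the distributive lattice `Fin (n - 1) → ℕ` the strictly increasing tuples form a sublattice
`W`, and `𝒜` is an up-set of `W`. By Holley's inequality (the Ahlswede–Daykin four functions
theorem, passed from finite to infinite sums) it suffices that the two weights satisfy
`w₃ a * w₂ b ≤ w₃ (a ⊓ b) * w₂ (a ⊔ b)` on `W`. The Vandermonde factor satisfies this pair by
pair, because `(x₂ - x₁) * (y₂ - y₁) ≤ (x₂ ⊓ y₂ - x₁ ⊓ y₁) * (x₂ ⊔ y₂ - x₁ ⊔ y₁)`; the product
factor satisfies it coordinatewise because `h ↦ h² / ((h + 2) * (h + 1))` is increasing.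
Summability comes from `|Δ h| ≤ (∏ i, (h i + 1)) ^ (n - 1) ^ 2` against the geometric decay `q ^ h`.
-/

open Finset Matrix Filter Topology

section FourFunctions

variable {α : Type*} [DistribLattice α]

theorem tsum_mul_tsum_le_of_four_functions {f₁ f₂ f₃ f₄ : α → ℝ} (h₁ : 0 ≤ f₁) (h₂ : 0 ≤ f₂)
    (h₃ : 0 ≤ f₃) (h₄ : 0 ≤ f₄) (hs₃ : Summable f₃) (hs₄ : Summable f₄)
    (h : ∀ a b, f₁ a * f₂ b ≤ f₃ (a ⊓ b) * f₄ (a ⊔ b)) :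
    (∑' a, f₁ a) * ∑' a, f₂ a ≤ (∑' a, f₃ a) * ∑' a, f₄ a := by
  classical
  by_cases hs : Summable f₁ ∧ Summable f₂
  swap
  -- a non-summable `tsum` is `0`
  · have hRHS : 0 ≤ (∑' a, f₃ a) * ∑' a, f₄ a := mul_nonneg (tsum_nonneg h₃) (tsum_nonneg h₄)
    rcases not_and_or.1 hs with hs | hs <;> simpa [tsum_eq_zero_of_not_summable hs] using hRHS
  have hlim : Tendsto (fun p : Finset α × Finset α => (∑ a ∈ p.1, f₁ a) * ∑ a ∈ p.2, f₂ a)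
      (atTop ×ˢ atTop) (𝓝 ((∑' a, f₁ a) * ∑' a, f₂ a)) :=
    (hs.1.hasSum.comp tendsto_fst).mul (hs.2.hasSum.comp tendsto_snd)
  refine le_of_tendsto' hlim fun p => ?_
  exact (four_functions_theorem f₁ f₂ f₃ f₄ h₁ h₂ h₃ h₄ h p.1 p.2).trans <|
    mul_le_mul (hs₃.sum_le_tsum _ fun a _ => h₃ a) (hs₄.sum_le_tsum _ fun a _ => h₄ a)
      (sum_nonneg fun a _ => h₄ a) (tsum_nonneg h₃)

theorem IsSublattice.tsum_mul_tsum_le {W 𝒜 : Set α} (hW : IsSublattice W) (h𝒜W : 𝒜 ⊆ W)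
    (h𝒜 : ∀ a ∈ 𝒜, ∀ b ∈ W, a ≤ b → b ∈ 𝒜) {μ ν : α → ℝ} (hμ : 0 ≤ μ) (hν : 0 ≤ ν)
    (hμs : Summable μ) (hνs : Summable ν)
    (hholley : ∀ a ∈ W, ∀ b ∈ W, ν a * μ b ≤ ν (a ⊓ b) * μ (a ⊔ b)) :
    (∑' a : 𝒜, ν a) * ∑' a : W, μ a ≤ (∑' a : W, ν a) * ∑' a : 𝒜, μ a := by
  simp only [_root_.tsum_subtype]
  refine tsum_mul_tsum_le_of_four_functions (Set.indicator_nonneg fun a _ => hν a)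
    (Set.indicator_nonneg fun a _ => hμ a) (Set.indicator_nonneg fun a _ => hν a)
    (Set.indicator_nonneg fun a _ => hμ a) (hνs.indicator W) (hμs.indicator 𝒜) fun a b => ?_
  by_cases hab : a ∈ 𝒜 ∧ b ∈ W
  · obtain ⟨ha, hb⟩ := hab
    rw [Set.indicator_of_mem ha, Set.indicator_of_mem hb,
      Set.indicator_of_mem (hW.infClosed (h𝒜W ha) hb),
      Set.indicator_of_mem (h𝒜 a ha _ (hW.supClosed (h𝒜W ha) hb) le_sup_left)]
    exact hholley a (h𝒜W ha) b hb
  · have hzero : 𝒜.indicator ν a * W.indicator μ b = 0 := by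
      rcases not_and_or.1 hab with ha | hb
      · rw [Set.indicator_of_notMem ha, zero_mul]
      · rw [Set.indicator_of_notMem hb, mul_zero]
    rw [hzero]
    exact mul_nonneg (Set.indicator_nonneg (fun a _ => hν a) _)
      (Set.indicator_nonneg (fun a _ => hμ a) _)

end FourFunctions

theorem summable_pi_prod {ι : Type*} [Fintype ι] {κ : ι → Type*} {g : ∀ i, κ i → ℝ}
    (hg : ∀ i, 0 ≤ g i) (hgs : ∀ i, Summable (g i)) :
    Summable fun x : ∀ i, κ i => ∏ i, g i (x i) := by
  classical
  refine summable_of_sum_le (c := ∏ i, ∑' y, g i y) (fun x => prod_nonneg fun i _ => hg i _)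
    fun s => ?_
  calc ∑ x ∈ s, ∏ i, g i (x i)
      ≤ ∑ x ∈ Fintype.piFinset fun i => s.image (· i), ∏ i, g i (x i) :=
        sum_le_sum_of_subset_of_nonneg
          (fun x hx => Fintype.mem_piFinset.2 fun i => mem_image_of_mem _ hx)
          fun x _ _ => prod_nonneg fun i _ => hg i _
    _ = ∏ i, ∑ y ∈ s.image (· i), g i y := (prod_univ_sum _ _).symm
    _ ≤ ∏ i, ∑' y, g i y :=
        prod_le_prod (fun i _ => sum_nonneg fun y _ => hg i y)
          fun i _ => (hgs i).sum_le_tsum _ fun y _ => hg i y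

theorem summable_add_one_pow_mul_geometric (k : ℕ) {q : ℝ} (hq0 : 0 < q) (hq1 : q < 1) :
    Summable fun x : ℕ => ((x : ℝ) + 1) ^ k * q ^ x := by
  have hq : ‖q‖ < 1 := by rwa [Real.norm_of_nonneg hq0.le]
  have hshift := (summable_nat_add_iff (f := fun x : ℕ => (x : ℝ) ^ k * q ^ x) 1).2
    (summable_pow_mul_geometric_of_norm_lt_one k hq)
  refine (hshift.div_const q).congr fun x => ?_
  simp only [pow_succ, Nat.cast_succ, mul_div_assoc, mul_div_cancel_right₀ _ hq0.ne']

theorem summable_add_one_pow_mul_of_le_geometric {φ : ℕ → ℝ} (hφ : 0 ≤ φ) {q C : ℝ}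
    (hq0 : 0 < q) (hq1 : q < 1) {d : ℕ} (hle : ∀ x, φ x ≤ C * ((x : ℝ) + 1) ^ d * q ^ x)
    (k : ℕ) : Summable fun x : ℕ => ((x : ℝ) + 1) ^ k * φ x := by
  refine ((summable_add_one_pow_mul_geometric (k + d) hq0 hq1).mul_left C).of_nonneg_of_le
    (fun x => mul_nonneg (by positivity) (hφ x)) fun x => ?_
  calc ((x : ℝ) + 1) ^ k * φ x ≤ ((x : ℝ) + 1) ^ k * (C * ((x : ℝ) + 1) ^ d * q ^ x) := by
        gcongr
        exact hle x
    _ = C * (((x : ℝ) + 1) ^ (k + d) * q ^ x) := by ring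

section Vandermonde

variable {R : Type*} [CommRing R] [LinearOrder R] [IsStrictOrderedRing R] {m : ℕ}

theorem sub_mul_sub_le_min_sub_min_mul_max_sub_max (x₁ x₂ y₁ y₂ : R) :
    (x₂ - x₁) * (y₂ - y₁) ≤ (min x₂ y₂ - min x₁ y₁) * (max x₂ y₂ - max x₁ y₁) := by
  rcases le_total x₁ y₁ with h₁ | h₁ <;> rcases le_total x₂ y₂ with h₂ | h₂ <;>
    simp only [min_eq_left, min_eq_right, max_eq_left, max_eq_right, h₁, h₂] <;> nlinarith

theorem det_vandermonde_nonneg {v : Fin m → R} (hv : Monotone v) : 0 ≤ det (vandermonde v) := by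
  rw [det_vandermonde]
  exact prod_nonneg fun i _ => prod_nonneg fun j hj => sub_nonneg.2 (hv (mem_Ioi.1 hj).le)

theorem det_vandermonde_mul_det_vandermonde_le {v w : Fin m → R} (hv : Monotone v)
    (hw : Monotone w) :
    det (vandermonde v) * det (vandermonde w) ≤
      det (vandermonde (v ⊓ w)) * det (vandermonde (v ⊔ w)) := by
  simp only [det_vandermonde, ← prod_mul_distrib]
  have hfac : ∀ i, ∀ j ∈ Ioi i, 0 ≤ (v j - v i) * (w j - w i) := fun i j hj =>
    mul_nonneg (sub_nonneg.2 (hv (mem_Ioi.1 hj).le)) (sub_nonneg.2 (hw (mem_Ioi.1 hj).le))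
  exact prod_le_prod (fun i _ => prod_nonneg (hfac i)) fun i _ =>
    prod_le_prod (hfac i) fun _ _ => sub_mul_sub_le_min_sub_min_mul_max_sub_max ..

theorem abs_det_vandermonde_le {v : Fin m → R} {B : R} (hB : 1 ≤ B)
    (hv : ∀ i j, |v j - v i| ≤ B) : |det (vandermonde v)| ≤ B ^ (m * m) := by
  rw [det_vandermonde, abs_prod]
  calc ∏ i, |∏ j ∈ Ioi i, (v j - v i)| ≤ ∏ _i : Fin m, B ^ m := by
        refine prod_le_prod (fun i _ => abs_nonneg _) fun i _ => ?_
        calc |∏ j ∈ Ioi i, (v j - v i)| ≤ ∏ _j ∈ Ioi i, B := by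
              rw [abs_prod]
              exact prod_le_prod (fun j _ => abs_nonneg _) fun j _ => hv i j
          _ ≤ B ^ m := by
              rw [prod_const]
              exact pow_le_pow_right₀ hB ((card_le_univ _).trans_eq (Fintype.card_fin m))
    _ = B ^ (m * m) := by rw [prod_const, card_univ, Fintype.card_fin, ← pow_mul]

end Vandermonde

section TiltedVandermonde

variable {m : ℕ}

noncomputable def tiltedVandermonde (φ : ℕ → ℝ) (h : Fin m → ℕ) : ℝ :=
  det (vandermonde fun i => (h i : ℝ)) ^ 2 * ∏ i, φ (h i)

variable {φ ψ : ℕ → ℝ}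

theorem tiltedVandermonde_nonneg (hφ : 0 ≤ φ) (h : Fin m → ℕ) : 0 ≤ tiltedVandermonde φ h :=
  mul_nonneg (sq_nonneg _) (prod_nonneg fun _ _ => hφ _)

theorem tiltedVandermonde_pos {h : Fin m → ℕ} (hh : Function.Injective h)
    (hφ : ∀ i, 0 < φ (h i)) : 0 < tiltedVandermonde φ h :=
  mul_pos (sq_pos_iff.2 (det_vandermonde_ne_zero_iff.2 (Nat.cast_injective.comp hh)))
    (prod_pos fun i _ => hφ i)

theorem summable_tiltedVandermonde (hφ : 0 ≤ φ)
    (hφs : ∀ k, Summable fun x : ℕ => ((x : ℝ) + 1) ^ k * φ x) :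
    Summable (tiltedVandermonde (m := m) φ) := by
  refine Summable.of_nonneg_of_le (tiltedVandermonde_nonneg hφ) (fun h => ?_)
    (summable_pi_prod (g := fun _ (x : ℕ) => ((x : ℝ) + 1) ^ (m * m * 2) * φ x)
      (fun _ x => mul_nonneg (by positivity) (hφ x)) fun _ => hφs _)
  set P : ℕ := ∏ k, (h k + 1)
  have hhP : ∀ i, h i ≤ P := fun i =>
    (Nat.le_succ _).trans
      (single_le_prod' (f := fun k => h k + 1) (fun k _ => Nat.succ_pos _) (mem_univ i))
  have hΔ : |det (vandermonde fun i => (h i : ℝ))| ≤ (P : ℝ) ^ (m * m) := by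
    refine abs_det_vandermonde_le (by exact_mod_cast prod_pos fun k _ => Nat.succ_pos (h k))
      fun i j => ?_
    have hi : (h i : ℝ) ≤ P := by exact_mod_cast hhP i
    have hj : (h j : ℝ) ≤ P := by exact_mod_cast hhP j
    have hi0 := Nat.cast_nonneg (α := ℝ) (h i)
    have hj0 := Nat.cast_nonneg (α := ℝ) (h j)
    exact abs_sub_le_iff.2 ⟨by linarith, by linarith⟩
  calc tiltedVandermonde φ h = |det (vandermonde fun i => (h i : ℝ))| ^ 2 * ∏ i, φ (h i) := by
        rw [tiltedVandermonde, sq_abs]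
    _ ≤ ((P : ℝ) ^ (m * m)) ^ 2 * ∏ i, φ (h i) := by
        gcongr
        exact prod_nonneg fun _ _ => hφ _
    _ = ∏ i, (((h i : ℝ) + 1) ^ (m * m * 2) * φ (h i)) := by
        rw [← pow_mul, prod_mul_distrib, prod_pow]
        push_cast [P]
        rfl

theorem tiltedVandermonde_mul_le (hφ : 0 ≤ φ) (hψ : 0 ≤ ψ)
    (hψφ : ∀ a b, a ≤ b → ψ b * φ a ≤ ψ a * φ b) {a b : Fin m → ℕ} (ha : Monotone a)
    (hb : Monotone b) :
    tiltedVandermonde ψ a * tiltedVandermonde φ b ≤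
      tiltedVandermonde ψ (a ⊓ b) * tiltedVandermonde φ (a ⊔ b) := by
  have hinf : (fun i => ((a ⊓ b) i : ℝ)) = (fun i => (a i : ℝ)) ⊓ fun i => (b i : ℝ) :=
    funext fun i => Nat.cast_min (a i) (b i)
  have hsup : (fun i => ((a ⊔ b) i : ℝ)) = (fun i => (a i : ℝ)) ⊔ fun i => (b i : ℝ) :=
    funext fun i => Nat.cast_max (a i) (b i)
  have hcast {c : Fin m → ℕ} (hc : Monotone c) : Monotone fun i => (c i : ℝ) :=
    fun _ _ hij => Nat.cast_le.2 (hc hij)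
  have hdet := det_vandermonde_mul_det_vandermonde_le (hcast ha) (hcast hb)
  rw [← hinf, ← hsup] at hdet
  have hprod : (∏ i, ψ (a i)) * ∏ i, φ (b i) ≤ (∏ i, ψ ((a ⊓ b) i)) * ∏ i, φ ((a ⊔ b) i) := by
    simp only [← prod_mul_distrib]
    refine prod_le_prod (fun i _ => mul_nonneg (hψ _) (hφ _)) fun i _ => ?_
    rcases le_total (a i) (b i) with hab | hba
    · rw [Pi.inf_apply, Pi.sup_apply, inf_eq_left.2 hab, sup_eq_right.2 hab]
    · rw [Pi.inf_apply, Pi.sup_apply, inf_eq_right.2 hba, sup_eq_left.2 hba]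
      exact hψφ _ _ hba
  calc tiltedVandermonde ψ a * tiltedVandermonde φ b
      = (det (vandermonde fun i => (a i : ℝ)) * det (vandermonde fun i => (b i : ℝ))) ^ 2 *
          ((∏ i, ψ (a i)) * ∏ i, φ (b i)) := by
        simp only [tiltedVandermonde]; ring
    _ ≤ (det (vandermonde fun i => ((a ⊓ b) i : ℝ)) *
          det (vandermonde fun i => ((a ⊔ b) i : ℝ))) ^ 2 *
          ((∏ i, ψ ((a ⊓ b) i)) * ∏ i, φ ((a ⊔ b) i)) :=
        mul_le_mul (pow_le_pow_left₀ (mul_nonneg (det_vandermonde_nonneg (hcast ha))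
          (det_vandermonde_nonneg (hcast hb))) hdet 2) hprod
          (mul_nonneg (prod_nonneg fun _ _ => hψ _) (prod_nonneg fun _ _ => hφ _)) (sq_nonneg _)
    _ = tiltedVandermonde ψ (a ⊓ b) * tiltedVandermonde φ (a ⊔ b) := by
        simp only [tiltedVandermonde]; ring

end TiltedVandermonde

theorem isSublattice_setOf_strictMono {ι β : Type*} [Preorder ι] [LinearOrder β] :
    IsSublattice {h : ι → β | StrictMono h} :=
  ⟨fun _ ha _ hb _ _ hij => max_lt_max (ha hij) (hb hij),
    fun _ ha _ hb _ _ hij => min_lt_min (ha hij) (hb hij)⟩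

section TiltedVandermondeEnsemble

variable {m : ℕ} {φ ψ : ℕ → ℝ}

theorem tsum_tiltedVandermonde_pos (hφ : 0 ≤ φ)
    (hφs : ∀ k, Summable fun x : ℕ => ((x : ℝ) + 1) ^ k * φ x) (hφpos : ∀ᶠ x in atTop, 0 < φ x) :
    0 < ∑' h : {h : Fin m → ℕ | StrictMono h}, tiltedVandermonde φ h.1 := by
  obtain ⟨N, hN⟩ := eventually_atTop.1 hφpos
  have hmono : StrictMono fun i : Fin m => N + (i : ℕ) := fun _ _ hij =>
    Nat.add_lt_add_left hij N
  have hs : Summable fun h : {h : Fin m → ℕ | StrictMono h} => tiltedVandermonde φ h.1 :=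
    (summable_tiltedVandermonde hφ hφs).subtype _
  exact hs.tsum_pos (fun h => tiltedVandermonde_nonneg hφ h.1) ⟨_, hmono⟩
    (tiltedVandermonde_pos hmono.injective fun i => hN _ (Nat.le_add_right _ _))

theorem tsum_tiltedVandermonde_mul_le (hφ : 0 ≤ φ) (hψ : 0 ≤ ψ)
    (hφs : ∀ k, Summable fun x : ℕ => ((x : ℝ) + 1) ^ k * φ x)
    (hψs : ∀ k, Summable fun x : ℕ => ((x : ℝ) + 1) ^ k * ψ x)
    (hψφ : ∀ a b, a ≤ b → ψ b * φ a ≤ ψ a * φ b) {𝒜 : Set (Fin m → ℕ)}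
    (h𝒜W : 𝒜 ⊆ {h | StrictMono h})
    (h𝒜 : ∀ h ∈ 𝒜, ∀ g ∈ {h : Fin m → ℕ | StrictMono h}, h ≤ g → g ∈ 𝒜) :
    (∑' h : 𝒜, tiltedVandermonde ψ h.1) *
        ∑' h : {h : Fin m → ℕ | StrictMono h}, tiltedVandermonde φ h.1 ≤
      (∑' h : {h : Fin m → ℕ | StrictMono h}, tiltedVandermonde ψ h.1) *
        ∑' h : 𝒜, tiltedVandermonde φ h.1 :=
  isSublattice_setOf_strictMono.tsum_mul_tsum_le h𝒜W h𝒜 (tiltedVandermonde_nonneg hφ)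
    (tiltedVandermonde_nonneg hψ) (summable_tiltedVandermonde hφ hφs)
    (summable_tiltedVandermonde hψ hψs)
    fun _ ha _ hb => tiltedVandermonde_mul_le hφ hψ hψφ ha.monotone hb.monotone

end TiltedVandermondeEnsemble

theorem add_two_mul_add_one_mul_sq_le {a b : ℝ} (ha : 0 ≤ a) (hab : a ≤ b) :
    (b + 2) * (b + 1) * a ^ 2 ≤ (a + 2) * (a + 1) * b ^ 2 := by
  nlinarith [mul_nonneg (mul_nonneg ha (ha.trans hab)) (sub_nonneg.2 hab),
    mul_nonneg (add_nonneg ha (ha.trans hab)) (sub_nonneg.2 hab)]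

theorem stmt_19_general (n : ℕ) (q : ℝ) (hq0 : 0 < q) (hq1 : q < 1)
    (W : Set (Fin (n - 1) → ℕ)) (hW : W = {h | StrictMono h})
    (Δ : (Fin (n - 1) → ℕ) → ℝ)
    (hΔ : ∀ h, Δ h = ∏ i : Fin (n - 1), ∏ j ∈ Finset.Ioi i, ((h j : ℝ) - (h i : ℝ)))
    (Z₂ Z₃ : ℝ)
    (hZ₂ : Z₂ = ∑' h : W, (Δ h.1) ^ 2 * ∏ i, ((h.1 i : ℝ) ^ 2 * q ^ (h.1 i)))
    (hZ₃ : Z₃ = ∑' h : W, (Δ h.1) ^ 2 *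
      ∏ i, (((h.1 i : ℝ) + 2) * ((h.1 i : ℝ) + 1) * q ^ (h.1 i)))
    (𝒜 : Set (Fin (n - 1) → ℕ)) (h𝒜W : 𝒜 ⊆ W)
    (h𝒜inc : ∀ h ∈ 𝒜, ∀ g ∈ W, (∀ i, h i ≤ g i) → g ∈ 𝒜) :
    (1 / Z₃) * ∑' h : 𝒜, (Δ h.1) ^ 2 *
        ∏ i, (((h.1 i : ℝ) + 2) * ((h.1 i : ℝ) + 1) * q ^ (h.1 i))
      ≤ (1 / Z₂) * ∑' h : 𝒜, (Δ h.1) ^ 2 * ∏ i, ((h.1 i : ℝ) ^ 2 * q ^ (h.1 i)) := by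
  have hΔdet : Δ = fun h => det (vandermonde fun i => (h i : ℝ)) :=
    funext fun h => by rw [hΔ, det_vandermonde]
  subst hΔdet hW hZ₂ hZ₃
  set φ : ℕ → ℝ := fun x => (x : ℝ) ^ 2 * q ^ x
  set ψ : ℕ → ℝ := fun x => ((x : ℝ) + 2) * ((x : ℝ) + 1) * q ^ x
  change (1 / ∑' h : {h : Fin (n - 1) → ℕ | StrictMono h}, tiltedVandermonde ψ h.1) *
      ∑' h : 𝒜, tiltedVandermonde ψ h.1 ≤
    (1 / ∑' h : {h : Fin (n - 1) → ℕ | StrictMono h}, tiltedVandermonde φ h.1) *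
      ∑' h : 𝒜, tiltedVandermonde φ h.1
  have hφ : 0 ≤ φ := fun x => by positivity
  have hψ : 0 ≤ ψ := fun x => by positivity
  have hφs := summable_add_one_pow_mul_of_le_geometric hφ hq0 hq1 (C := 1) (d := 2) fun x =>
    mul_le_mul_of_nonneg_right (by nlinarith [(Nat.cast_nonneg x : (0 : ℝ) ≤ x)]) (by positivity)
  have hψs := summable_add_one_pow_mul_of_le_geometric hψ hq0 hq1 (C := 2) (d := 2) fun x =>
    mul_le_mul_of_nonneg_right (by nlinarith [(Nat.cast_nonneg x : (0 : ℝ) ≤ x)]) (by positivity)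
  have hψφ : ∀ a b, a ≤ b → ψ b * φ a ≤ ψ a * φ b := fun a b hab =>
    calc ψ b * φ a = ((b + 2) * (b + 1) * (a : ℝ) ^ 2) * (q ^ a * q ^ b) := by ring
      _ ≤ ((a + 2) * (a + 1) * (b : ℝ) ^ 2) * (q ^ a * q ^ b) :=
          mul_le_mul_of_nonneg_right
            (add_two_mul_add_one_mul_sq_le (Nat.cast_nonneg a) (Nat.cast_le.2 hab)) (by positivity)
      _ = ψ a * φ b := by ring
  have hZφ := tsum_tiltedVandermonde_pos (m := n - 1) hφ hφs <|
    eventually_atTop.2 ⟨1, fun x hx => mul_pos (pow_pos (Nat.cast_pos.2 hx) 2) (pow_pos hq0 x)⟩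
  have hZψ := tsum_tiltedVandermonde_pos (m := n - 1) hψ hψs <|
    Eventually.of_forall fun x => by positivity
  rw [one_div_mul_eq_div, one_div_mul_eq_div, div_le_div_iff₀ hZψ hZφ]
  exact (tsum_tiltedVandermonde_mul_le hφ hψ hφs hψs hψφ h𝒜W h𝒜inc).trans_eq (mul_comm _ _)

theorem stmt_19 (n : ℕ) (hn : 2 ≤ n) (q : ℝ) (hq0 : 0 < q) (hq1 : q < 1)
    (W : Set (Fin (n - 1) → ℕ)) (hW : W = {h | StrictMono h})
    (Δ : (Fin (n - 1) → ℕ) → ℝ)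
    (hΔ : ∀ h, Δ h = ∏ i : Fin (n - 1), ∏ j ∈ Finset.Ioi i, ((h j : ℝ) - (h i : ℝ)))
    (Z₂ Z₃ : ℝ)
    (hZ₂ : Z₂ = ∑' h : W, (Δ h.1) ^ 2 * ∏ i, ((h.1 i : ℝ) ^ 2 * q ^ (h.1 i)))
    (hZ₃ : Z₃ = ∑' h : W, (Δ h.1) ^ 2 *
      ∏ i, (((h.1 i : ℝ) + 2) * ((h.1 i : ℝ) + 1) * q ^ (h.1 i)))
    (𝒜 : Set (Fin (n - 1) → ℕ)) (h𝒜W : 𝒜 ⊆ W)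
    (h𝒜inc : ∀ h ∈ 𝒜, ∀ g ∈ W, (∀ i, h i ≤ g i) → g ∈ 𝒜) :
    (1 / Z₃) * ∑' h : 𝒜, (Δ h.1) ^ 2 *
        ∏ i, (((h.1 i : ℝ) + 2) * ((h.1 i : ℝ) + 1) * q ^ (h.1 i))
      ≤ (1 / Z₂) * ∑' h : 𝒜, (Δ h.1) ^ 2 * ∏ i, ((h.1 i : ℝ) ^ 2 * q ^ (h.1 i)) :=
  stmt_19_general n q hq0 hq1 W hW Δ hΔ Z₂ Z₃ hZ₂ hZ₃ 𝒜 h𝒜W h𝒜inc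
end
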